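/- Let $G$ be a finite simple graph. For each edge $i$ of $G$ (with $i = 1,\dots,e$) let $k_i \geq 1$ be a multiplicity. Then in the Laurent polynomial ring $\mathbb{Z}[A, A^{-1}]$, writing $\delta = -A^2 - A^{-2}$ and $c = \sum_i k_i$: $A^c \delta^{v-1} + \sum_{i=1}^{e}\sum_{j=1}^{k_i} \binom{k_i}{j} A^{c-2j} \delta^{v-2+j-1} = (-1)^{v-1}A^{c+2v-2} + (-1)^{v-2}(e-v+1)A^{c+2v-6} + (\text{terms of degree} \leq c+2v-10)$, where $v$ is the number of vertices of $G$. -/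

import Mathlib

/-! Since `δ ^ n = (-1) ^ n ∑ᵢ C(n, i) A ^ (4i - 2n)`, the product `A ^ a δ ^ n` has coefficient
`(-1) ^ n` in degree `a + 2n`, coefficient `(-1) ^ n n` in degree `a + 2n - 4`, and nothing else
above degree `a + 2n - 8`. The all-`A` state thus contributes to both leading degrees, while every
state with `j ≥ 1` splicings on an edge of multiplicity `k` reaches only the second one, with
coefficient `(-1) ^ (v + j - 1) C(k, j)`; the alternating binomial sum makes each edge contribute
`(-1) ^ v` in total. -/

open LaurentPolynomial Finset

section

variable {R : Type*} [CommRing R]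

local notation "δ" => (-T 2 - T (-2) : R[T;T⁻¹])

theorem T_mul_delta_pow (a : ℤ) (n : ℕ) :
    T a * δ ^ n = ∑ i ∈ range (n + 1), C ((-1) ^ n * (n.choose i : R)) * T (a + 4 * i - 2 * n) := by
  rw [show δ = -(T 2 + T (-2)) by ring, neg_pow, add_pow, mul_sum, mul_sum]
  refine sum_congr rfl fun i hi => ?_
  have hin : ((n - i : ℕ) : ℤ) = n - i := by simp at hi; omega
  rw [T_pow, T_pow, show a + 4 * i - 2 * n = a + (i * 2 + (n - i : ℕ) * (-2)) by rw [hin]; ring,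
    T_add, T_add, map_mul, map_pow, map_natCast, map_neg, map_one]
  ring

theorem coeff_T_mul_delta_pow (a : ℤ) (n : ℕ) (m : ℤ) :
    (T a * δ ^ n).coeff m =
      ∑ i ∈ range (n + 1), if a + 4 * i - 2 * n = m then (-1) ^ n * (n.choose i : R) else 0 := by
  simp only [T_mul_delta_pow, ← single_eq_C_mul_T, AddMonoidAlgebra.coeff_sum,
    Finsupp.finsetSum_apply, AddMonoidAlgebra.coeff_single, Finsupp.single_apply]

theorem coeff_T_mul_delta_pow_of_eq {a : ℤ} {n : ℕ} {m : ℤ} (hm : m = a + 2 * n) :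
    (T a * δ ^ n).coeff m = (-1) ^ n := by
  rw [coeff_T_mul_delta_pow, sum_eq_single_of_mem n (self_mem_range_succ n)]
  · rw [if_pos (by omega), Nat.choose_self, Nat.cast_one, mul_one]
  · intro i hi hin
    have := mem_range.mp hi
    rw [if_neg (by omega)]

theorem coeff_T_mul_delta_pow_of_eq_sub_four {a : ℤ} {n : ℕ} {m : ℤ} (hm : m = a + 2 * n - 4) :
    (T a * δ ^ n).coeff m = (-1) ^ n * (n : R) := by
  rcases Nat.eq_zero_or_pos n with rfl | hn
  · rw [coeff_T_mul_delta_pow, sum_range_one, if_neg (by omega)]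
    simp
  rw [coeff_T_mul_delta_pow, sum_eq_single_of_mem (n - 1) (by simp)]
  · rw [if_pos (by omega), Nat.choose_symm hn, Nat.choose_one_right]
  · intro i hi hin
    have := mem_range.mp hi
    rw [if_neg (by omega)]

theorem coeff_T_mul_delta_pow_eq_zero {a : ℤ} {n : ℕ} {m : ℤ} (hm : a + 2 * n - 8 < m)
    (hm₀ : m ≠ a + 2 * n) (hm₁ : m ≠ a + 2 * n - 4) : (T a * δ ^ n).coeff m = 0 := by
  rw [coeff_T_mul_delta_pow]
  refine sum_eq_zero fun i hi => if_neg ?_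
  have := mem_range.mp hi
  omega

theorem sum_Icc_choose_mul_neg_one_pow_sub_one {n : ℕ} (hn : n ≠ 0) :
    ∑ j ∈ Icc 1 n, (n.choose j : ℤ) * (-1) ^ (j - 1) = 1 := by
  have h := Int.alternating_sum_range_choose_of_ne hn
  rw [range_eq_Ico, sum_eq_sum_Ico_succ_bot n.succ_pos] at h
  have : ∑ j ∈ Icc 1 n, (n.choose j : ℤ) * (-1) ^ (j - 1) =
      -∑ j ∈ Ico 1 (n + 1), (-1) ^ j * (n.choose j : ℤ) := by
    rw [← sum_neg_distrib]
    refine sum_congr (by ext; simp) fun j hj => ?_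
    obtain ⟨i, rfl⟩ : ∃ i, j = i + 1 := ⟨j - 1, by simp at hj; omega⟩
    simp [pow_succ, mul_comm]
  simp only [pow_zero, Nat.choose_zero_right, Nat.cast_one, mul_one, zero_add] at h
  linarith

noncomputable def multiEdgeSum (k : ℕ) (a : ℤ) (n : ℕ) : R[T;T⁻¹] :=
  ∑ j ∈ Icc 1 k, (k.choose j : ℤ) • (T (a - 2 * j) * δ ^ (n + j - 1))

theorem coeff_multiEdgeSum (k : ℕ) (a : ℤ) (n : ℕ) (m : ℤ) :
    (multiEdgeSum k a n : R[T;T⁻¹]).coeff m =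
      ∑ j ∈ Icc 1 k, (k.choose j : ℤ) • (T (a - 2 * j) * δ ^ (n + j - 1)).coeff m := by
  simp only [multiEdgeSum, AddMonoidAlgebra.coeff_sum, AddMonoidAlgebra.coeff_smul,
    Finsupp.finsetSum_apply, Finsupp.smul_apply]

theorem coeff_multiEdgeSum_of_eq {k : ℕ} (hk : k ≠ 0) {a : ℤ} {n : ℕ} {m : ℤ}
    (hm : m = a + 2 * n - 2) : (multiEdgeSum k a n : R[T;T⁻¹]).coeff m = (-1) ^ n := by
  have term : ∀ j ∈ Icc 1 k, (k.choose j : ℤ) • (T (a - 2 * j) * δ ^ (n + j - 1)).coeff m =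
      (-1) ^ n * ((k.choose j * (-1) ^ (j - 1) : ℤ) : R) := by
    intro j hj
    have hj : 1 ≤ j := (mem_Icc.mp hj).1
    rw [coeff_T_mul_delta_pow_of_eq (by omega), Nat.add_sub_assoc hj, pow_add, zsmul_eq_mul]
    push_cast
    ring
  rw [coeff_multiEdgeSum, sum_congr rfl term, ← mul_sum, ← Int.cast_sum,
    sum_Icc_choose_mul_neg_one_pow_sub_one hk, Int.cast_one, mul_one]

theorem coeff_multiEdgeSum_eq_zero {k : ℕ} {a : ℤ} {n : ℕ} {m : ℤ} (hm : a + 2 * n - 6 < m)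
    (hm₀ : m ≠ a + 2 * n - 2) : (multiEdgeSum k a n : R[T;T⁻¹]).coeff m = 0 := by
  rw [coeff_multiEdgeSum]
  refine sum_eq_zero fun j hj => ?_
  have hj : 1 ≤ j := (mem_Icc.mp hj).1
  rw [coeff_T_mul_delta_pow_eq_zero (by omega) (by omega) (by omega), smul_zero]

end

theorem bracket_two_leading_coeffs_general {V : Type*} [Fintype V] [Nonempty V]
    (G : SimpleGraph V) [DecidableRel G.Adj]
    (k : Sym2 V → ℕ) (hk : ∀ E ∈ G.edgeFinset, 1 ≤ k E)
    (v e : ℕ) (hv : v = Fintype.card V) (he : e = G.edgeFinset.card)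
    (c : ℕ) :
    let δ : LaurentPolynomial ℤ := -T 2 - T (-2)
    let L : LaurentPolynomial ℤ :=
      T (c : ℤ) * δ ^ (v - 1) +
        ∑ E ∈ G.edgeFinset, ∑ j ∈ Finset.Icc 1 (k E),
          ((k E).choose j : ℤ) • (T ((c : ℤ) - 2 * j) * δ ^ (v - 2 + j - 1))
    L.coeff ((c : ℤ) + 2 * v - 2) = (-1) ^ (v - 1) ∧
      L.coeff ((c : ℤ) + 2 * v - 6) = (-1) ^ v * ((e : ℤ) - v + 1) ∧
      ∀ m : ℤ, (c : ℤ) + 2 * v - 10 < m →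
        m ≠ (c : ℤ) + 2 * v - 2 → m ≠ (c : ℤ) + 2 * v - 6 → L.coeff m = 0 := by
  intro δ L
  have one_le : 1 ≤ v := hv ▸ Fintype.card_pos
  have two_le : ∀ E ∈ G.edgeFinset, 2 ≤ v := fun E hE => by
    induction E using Sym2.ind with
    | _ x y => exact hv ▸ Fintype.one_lt_card_iff.mpr ⟨x, y, (G.mem_edgeFinset.mp hE).ne⟩
  have coeff_L (m : ℤ) : L.coeff m = (T (c : ℤ) * δ ^ (v - 1)).coeff m +
      ∑ E ∈ G.edgeFinset, (multiEdgeSum (k E) c (v - 2)).coeff m := by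
    rw [show L = T (c : ℤ) * δ ^ (v - 1) + ∑ E ∈ G.edgeFinset, multiEdgeSum (k E) c (v - 2) from rfl,
      AddMonoidAlgebra.coeff_add, AddMonoidAlgebra.coeff_sum, Finsupp.add_apply,
      Finsupp.finsetSum_apply]
  have edges_eq_zero (m : ℤ) (hm : (c : ℤ) + 2 * v - 10 < m) (hm₁ : m ≠ (c : ℤ) + 2 * v - 6) :
      ∑ E ∈ G.edgeFinset, (multiEdgeSum (k E) c (v - 2) : ℤ[T;T⁻¹]).coeff m = 0 := by
    refine sum_eq_zero fun E hE => ?_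
    have := two_le E hE
    exact coeff_multiEdgeSum_eq_zero (by omega) (by omega)
  refine ⟨?_, ?_, fun m hm hm₀ hm₁ => ?_⟩
  · rw [coeff_L, coeff_T_mul_delta_pow_of_eq (by omega), edges_eq_zero _ (by omega) (by omega),
      add_zero]
  · have edge : ∀ E ∈ G.edgeFinset,
        (multiEdgeSum (k E) c (v - 2) : ℤ[T;T⁻¹]).coeff (c + 2 * v - 6) = (-1) ^ v := by
      intro E hE
      obtain ⟨u, rfl⟩ := Nat.exists_eq_add_of_le' (two_le E hE)
      rw [coeff_multiEdgeSum_of_eq (Nat.one_le_iff_ne_zero.mp (hk E hE)) (by omega)]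
      simp [pow_succ]
    rw [coeff_L, coeff_T_mul_delta_pow_of_eq_sub_four (by omega), sum_congr rfl edge, sum_const,
      ← he, nsmul_eq_mul]
    obtain ⟨u, rfl⟩ := Nat.exists_eq_add_of_le' one_le
    simp only [add_tsub_cancel_right, pow_succ, Nat.cast_add, Nat.cast_one]
    ring
  · rw [coeff_L, coeff_T_mul_delta_pow_eq_zero (by omega) (by omega) (by omega),
      edges_eq_zero m hm hm₁, add_zero]

/-- The algebraic core of the two leading coefficients of the Kauffman bracket of
an `A`-adequate diagram.  `G` is a finite simple graph with `v` vertices and `e`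
edges; each edge `E` carries a multiplicity `k E ≥ 1` and `c = ∑ k E`.  With
`δ = -A^2 - A^{-2}`, the sum
`A^c δ^{v-1} + ∑_E ∑_{j=1}^{k E} C(k E, j) A^{c-2j} δ^{v-2+j-1}`
equals `(-1)^{v-1} A^{c+2v-2} + (-1)^{v-2}(e-v+1) A^{c+2v-6}` plus terms of
degree `≤ c+2v-10`. -/
theorem bracket_two_leading_coeffs {V : Type*} [Fintype V] [Nonempty V]
    [DecidableEq V] (G : SimpleGraph V) [DecidableRel G.Adj]
    (k : Sym2 V → ℕ) (hk : ∀ E ∈ G.edgeFinset, 1 ≤ k E)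
    (v e : ℕ) (hv : v = Fintype.card V) (he : e = G.edgeFinset.card)
    (c : ℕ) (hc : c = ∑ E ∈ G.edgeFinset, k E) :
    let δ : LaurentPolynomial ℤ := -T 2 - T (-2)
    let L : LaurentPolynomial ℤ :=
      T (c : ℤ) * δ ^ (v - 1) +
        ∑ E ∈ G.edgeFinset, ∑ j ∈ Finset.Icc 1 (k E),
          ((k E).choose j : ℤ) • (T ((c : ℤ) - 2 * j) * δ ^ (v - 2 + j - 1))
    L.coeff ((c : ℤ) + 2 * v - 2) = (-1) ^ (v - 1) ∧
      L.coeff ((c : ℤ) + 2 * v - 6) = (-1) ^ v * ((e : ℤ) - v + 1) ∧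
      ∀ m : ℤ, (c : ℤ) + 2 * v - 10 < m →
        m ≠ (c : ℤ) + 2 * v - 2 → m ≠ (c : ℤ) + 2 * v - 6 → L.coeff m = 0 :=
  bracket_two_leading_coeffs_general G k hk v e hv he c
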